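/- arXiv:1911.03417 — 2 statements merged into one kernel-verified Lean document; each statement's English description precedes it below -/
import Mathlib

section
/- Weak duality for the graph convex-clustering denoising problem: let K be a real N × N matrix with nonnegative entries, δ_K the weighted pairwise-difference matrix with column (i,j) equal to K_{ij}(e_i − e_j), Φ a real N × N matrix, λ ≥ 0 and α ∈ [0,1]. Let Π be any nearest-point map onto the set Δ_N of doubly stochastic N × N matrices, i.e., Π(Y) ∈ Δ_N and ‖Y − Π(Y)‖_F ≤ ‖Y − Z‖_F for every Z ∈ Δ_N and every Y. Define h(p,q) = ‖Y − Π(Y)‖_F² − ‖Y‖_F² with Y = Φ − λ(α p δ_Kᵀ + (1−α) q δ_Kᵀ). Then for every doubly stochastic π, every p ∈ ℝ^{N×N²} whose columns have Euclidean norm at most 1, and every q ∈ ℝ^{N×N²} with all entries in [−1,1]: h(p,q) + ‖Φ‖_F² ≤ ‖π − Φ‖_F² + 2λ·(α Σ_{i,j} K_{ij} ‖π_{·i} − π_{·j}‖₂ + (1−α) Σ_{i,j} K_{ij} ‖π_{·i} − π_{·j}‖₁). -/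
open Matrix

/-- Weak duality for the graph convex-clustering denoising problem: for every doubly
stochastic `π`, every `p` whose columns have Euclidean norm at most 1, and every `q`
with entries in `[−1,1]`, with `Y = Φ − λ(α p δ_Kᵀ + (1−α) q δ_Kᵀ)` and `Π` a
nearest-point map onto the doubly stochastic matrices,
`h(p,q) + ‖Φ‖_F² ≤ ‖π − Φ‖_F² + 2λ(α ∑ K_{ij} ‖π_{·i} − π_{·j}‖₂ +
(1−α) ∑ K_{ij} ‖π_{·i} − π_{·j}‖₁)` where `h(p,q) = ‖Y − Π(Y)‖_F² − ‖Y‖_F²`. -/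
theorem stmt_15 (N : ℕ) (K : Matrix (Fin N) (Fin N) ℝ) (hK : ∀ i j, 0 ≤ K i j)
    (δK : Matrix (Fin N) (Fin N × Fin N) ℝ)
    (hδK : ∀ k i j, δK k (i, j) =
      K i j * ((if k = i then (1 : ℝ) else 0) - (if k = j then 1 else 0)))
    (Φ : Matrix (Fin N) (Fin N) ℝ) (lam α : ℝ)
    (hlam : 0 ≤ lam) (hα0 : 0 ≤ α) (hα1 : α ≤ 1)
    (Proj : Matrix (Fin N) (Fin N) ℝ → Matrix (Fin N) (Fin N) ℝ)
    (hProjMem : ∀ Y, (∀ i j, 0 ≤ Proj Y i j) ∧ (∀ i, ∑ j, Proj Y i j = 1) ∧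
      (∀ j, ∑ i, Proj Y i j = 1))
    (hProjNear : ∀ Y Z : Matrix (Fin N) (Fin N) ℝ,
      ((∀ i j, 0 ≤ Z i j) ∧ (∀ i, ∑ j, Z i j = 1) ∧ (∀ j, ∑ i, Z i j = 1)) →
      Real.sqrt (∑ i, ∑ j, ((Y - Proj Y) i j) ^ 2) ≤
        Real.sqrt (∑ i, ∑ j, ((Y - Z) i j) ^ 2))
    (π : Matrix (Fin N) (Fin N) ℝ)
    (hπpos : ∀ i j, 0 ≤ π i j) (hπrows : ∀ i, ∑ j, π i j = 1)
    (hπcols : ∀ j, ∑ i, π i j = 1)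
    (p q : Matrix (Fin N) (Fin N × Fin N) ℝ)
    (hp : ∀ c : Fin N × Fin N, Real.sqrt (∑ k, (p k c) ^ 2) ≤ 1)
    (hq : ∀ k c, |q k c| ≤ 1)
    (Y : Matrix (Fin N) (Fin N) ℝ)
    (hY : Y = Φ - lam • (α • (p * δKᵀ) + (1 - α) • (q * δKᵀ))) :
    ((∑ i, ∑ j, ((Y - Proj Y) i j) ^ 2) - (∑ i, ∑ j, (Y i j) ^ 2)) +
        (∑ i, ∑ j, (Φ i j) ^ 2) ≤
      (∑ i, ∑ j, ((π - Φ) i j) ^ 2) +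
        2 * lam * (α * (∑ i, ∑ j, K i j * Real.sqrt (∑ k, (π k i - π k j) ^ 2)) +
          (1 - α) * (∑ i, ∑ j, K i j * (∑ k, |π k i - π k j|))) := by
  -- Step 1: projection is nearest, so compare with π
  have hproj := hProjNear Y π ⟨hπpos, hπrows, hπcols⟩
  have hA : (0:ℝ) ≤ ∑ i, ∑ j, ((Y - Proj Y) i j) ^ 2 := by positivity
  have hB : (0:ℝ) ≤ ∑ i, ∑ j, ((Y - π) i j) ^ 2 := by positivity
  have h1 : (∑ i, ∑ j, ((Y - Proj Y) i j) ^ 2) ≤ ∑ i, ∑ j, ((Y - π) i j) ^ 2 := by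
    have h2 := pow_le_pow_left₀ (Real.sqrt_nonneg _) hproj 2
    rwa [Real.sq_sqrt hA, Real.sq_sqrt hB] at h2
  -- pointwise formula for Φ - Y
  have hY' : ∀ k m, Φ k m - Y k m =
      lam * (α * (p * δKᵀ) k m + (1 - α) * (q * δKᵀ) k m) := by
    intro k m
    simp [hY, Matrix.sub_apply, Matrix.smul_apply, Matrix.add_apply, smul_eq_mul]
    ring
  -- Step 2: algebraic identity
  have E : (∑ i, ∑ j, ((Y - π) i j) ^ 2) - (∑ i, ∑ j, (Y i j) ^ 2) +
        (∑ i, ∑ j, (Φ i j) ^ 2)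
      = (∑ i, ∑ j, ((π - Φ) i j) ^ 2) + 2 * ∑ k, ∑ m, π k m * (Φ k m - Y k m) := by
    rw [Finset.mul_sum, ← Finset.sum_sub_distrib, ← Finset.sum_add_distrib,
      ← Finset.sum_add_distrib]
    apply Finset.sum_congr rfl; intro i _
    rw [Finset.mul_sum, ← Finset.sum_sub_distrib, ← Finset.sum_add_distrib,
      ← Finset.sum_add_distrib]
    apply Finset.sum_congr rfl; intro j _
    simp only [Matrix.sub_apply]
    ring
  -- Step 3: split the inner product
  have hS : (∑ k, ∑ m, π k m * (Φ k m - Y k m))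
      = lam * α * (∑ k, ∑ m, π k m * (p * δKᵀ) k m) +
        lam * (1 - α) * (∑ k, ∑ m, π k m * (q * δKᵀ) k m) := by
    rw [Finset.mul_sum, Finset.mul_sum, ← Finset.sum_add_distrib]
    apply Finset.sum_congr rfl; intro k _
    rw [Finset.mul_sum, Finset.mul_sum, ← Finset.sum_add_distrib]
    apply Finset.sum_congr rfl; intro m _
    rw [hY' k m]; ring
  -- rewriting T_r for any matrix r
  have hT : ∀ r : Matrix (Fin N) (Fin N × Fin N) ℝ,
      (∑ k, ∑ m, π k m * (r * δKᵀ) k m)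
      = ∑ c : Fin N × Fin N, K c.1 c.2 * ∑ k, r k c * (π k c.1 - π k c.2) := by
    intro r
    have step : ∀ k m, π k m * (r * δKᵀ) k m = ∑ c : Fin N × Fin N,
        r k c * (K c.1 c.2 * π k m *
          ((if m = c.1 then (1:ℝ) else 0) - if m = c.2 then 1 else 0)) := by
      intro k m
      rw [Matrix.mul_apply, Finset.mul_sum]
      apply Finset.sum_congr rfl; intro c _
      rw [Matrix.transpose_apply]
      obtain ⟨i, j⟩ := c
      rw [hδK m i j]; ring
    calc (∑ k, ∑ m, π k m * (r * δKᵀ) k m)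
        = ∑ k, ∑ c : Fin N × Fin N, ∑ m,
            r k c * (K c.1 c.2 * π k m *
              ((if m = c.1 then (1:ℝ) else 0) - if m = c.2 then 1 else 0)) := by
          apply Finset.sum_congr rfl; intro k _
          rw [Finset.sum_comm]
          apply Finset.sum_congr rfl; intro m _
          exact step k m
      _ = ∑ c : Fin N × Fin N, ∑ k, ∑ m,
            r k c * (K c.1 c.2 * π k m *
              ((if m = c.1 then (1:ℝ) else 0) - if m = c.2 then 1 else 0)) :=
          Finset.sum_comm
      _ = ∑ c : Fin N × Fin N, K c.1 c.2 * ∑ k, r k c * (π k c.1 - π k c.2) := by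
          apply Finset.sum_congr rfl; intro c _
          rw [Finset.mul_sum]
          apply Finset.sum_congr rfl; intro k _
          rw [← Finset.mul_sum]
          have : (∑ m, K c.1 c.2 * π k m *
              ((if m = c.1 then (1:ℝ) else 0) - if m = c.2 then 1 else 0))
              = K c.1 c.2 * π k c.1 - K c.1 c.2 * π k c.2 := by
            simp only [mul_sub, mul_ite, mul_one, mul_zero, Finset.sum_sub_distrib,
              Finset.sum_ite_eq', Finset.mem_univ, if_true]
          rw [this]; ring
  -- Cauchy-Schwarz bound for p
  have hcs : ∀ c : Fin N × Fin N,
      (∑ k, p k c * (π k c.1 - π k c.2)) ≤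
        Real.sqrt (∑ k, (π k c.1 - π k c.2) ^ 2) := by
    intro c
    have h2 := Finset.sum_mul_sq_le_sq_mul_sq Finset.univ (fun k => p k c)
      (fun k => π k c.1 - π k c.2)
    calc (∑ k, p k c * (π k c.1 - π k c.2))
        ≤ |∑ k, p k c * (π k c.1 - π k c.2)| := le_abs_self _
      _ = Real.sqrt ((∑ k, p k c * (π k c.1 - π k c.2)) ^ 2) :=
          (Real.sqrt_sq_eq_abs _).symm
      _ ≤ Real.sqrt ((∑ k, (p k c) ^ 2) * ∑ k, (π k c.1 - π k c.2) ^ 2) :=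
          Real.sqrt_le_sqrt h2
      _ = Real.sqrt (∑ k, (p k c) ^ 2) * Real.sqrt (∑ k, (π k c.1 - π k c.2) ^ 2) :=
          Real.sqrt_mul (by positivity) _
      _ ≤ 1 * Real.sqrt (∑ k, (π k c.1 - π k c.2) ^ 2) :=
          mul_le_mul_of_nonneg_right (hp c) (Real.sqrt_nonneg _)
      _ = _ := one_mul _
  -- ℓ∞–ℓ¹ bound for q
  have hq1 : ∀ c : Fin N × Fin N,
      (∑ k, q k c * (π k c.1 - π k c.2)) ≤ ∑ k, |π k c.1 - π k c.2| := by
    intro c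
    apply Finset.sum_le_sum; intro k _
    calc q k c * (π k c.1 - π k c.2) ≤ |q k c * (π k c.1 - π k c.2)| := le_abs_self _
      _ = |q k c| * |π k c.1 - π k c.2| := abs_mul _ _
      _ ≤ 1 * |π k c.1 - π k c.2| :=
          mul_le_mul_of_nonneg_right (hq k c) (abs_nonneg _)
      _ = _ := one_mul _
  -- bound the two inner products
  have hTp : (∑ k, ∑ m, π k m * (p * δKᵀ) k m)
      ≤ ∑ i, ∑ j, K i j * Real.sqrt (∑ k, (π k i - π k j) ^ 2) := by
    rw [hT p, Fintype.sum_prod_type]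
    apply Finset.sum_le_sum; intro i _
    apply Finset.sum_le_sum; intro j _
    exact mul_le_mul_of_nonneg_left (hcs (i, j)) (hK i j)
  have hTq : (∑ k, ∑ m, π k m * (q * δKᵀ) k m)
      ≤ ∑ i, ∑ j, K i j * (∑ k, |π k i - π k j|) := by
    rw [hT q, Fintype.sum_prod_type]
    apply Finset.sum_le_sum; intro i _
    apply Finset.sum_le_sum; intro j _
    exact mul_le_mul_of_nonneg_left (hq1 (i, j)) (hK i j)
  have f1 : lam * α * (∑ k, ∑ m, π k m * (p * δKᵀ) k m)
      ≤ lam * α * (∑ i, ∑ j, K i j * Real.sqrt (∑ k, (π k i - π k j) ^ 2)) :=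
    mul_le_mul_of_nonneg_left hTp (mul_nonneg hlam hα0)
  have f2 : lam * (1 - α) * (∑ k, ∑ m, π k m * (q * δKᵀ) k m)
      ≤ lam * (1 - α) * (∑ i, ∑ j, K i j * (∑ k, |π k i - π k j|)) :=
    mul_le_mul_of_nonneg_left hTq (mul_nonneg hlam (by linarith))
  linarith [h1, E, hS, f1, f2]
end

section
/- Lipschitz continuity of the dual gradients (Proposition 1, second part): let K be a symmetric real N × N matrix, δ_K the weighted pairwise-difference matrix with column (i,j) equal to K_{ij}(e_i − e_j), Φ a real N × N matrix, λ ≥ 0 and α ∈ [0,1]. Let Π be any nearest-point map onto the set Δ_N of doubly stochastic N × N matrices, i.e., Π(Y) ∈ Δ_N and ‖Y − Π(Y)‖_F ≤ ‖Y − Z‖_F for all Z ∈ Δ_N and all Y. For p, q ∈ ℝ^{N×N²} define G(p,q) = Π(Φ − λ(α p δ_Kᵀ + (1−α) q δ_Kᵀ)) δ_K ∈ ℝ^{N×N²}. Then for all (p₁,q₁), (p₂,q₂): √( ‖2λα(G(p₁,q₁) − G(p₂,q₂))‖_F² + ‖2λ(1−α)(G(p₁,q₁) − G(p₂,q₂))‖_F²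 ) ≤ 16 λ² · max(α², (1−α)²) · (max_{1≤i≤N} Σ_{j=1}^N K_{ij}²) · √( ‖p₁ − p₂‖_F² + ‖q₁ − q₂‖_F² ). That is, the gradient map (p,q) ↦ (2λα G(p,q), 2λ(1−α) G(p,q)) of the dual objective is Lipschitz with constant L = 16λ² max(α²,(1−α)²) max_i ‖K_{i·}‖₂². -/
open Matrix

namespace Stmt16Aux

noncomputable def n2 {m n : Type*} [Fintype m] [Fintype n] (A : Matrix m n ℝ) : ℝ :=
  ∑ i, ∑ j, (A i j) ^ 2

noncomputable def ip {m n : Type*} [Fintype m] [Fintype n] (A B : Matrix m n ℝ) : ℝ :=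
  ∑ i, ∑ j, A i j * B i j

lemma n2_nonneg {m n : Type*} [Fintype m] [Fintype n] (A : Matrix m n ℝ) : 0 ≤ n2 A :=
  Finset.sum_nonneg fun _ _ => Finset.sum_nonneg fun _ _ => sq_nonneg _

lemma ip_cs {m n : Type*} [Fintype m] [Fintype n] (A B : Matrix m n ℝ) :
    (ip A B) ^ 2 ≤ n2 A * n2 B := by
  have h := Finset.sum_mul_sq_le_sq_mul_sq Finset.univ
    (fun p : m × n => A p.1 p.2) (fun p : m × n => B p.1 p.2)
  simpa [ip, n2, Fintype.sum_prod_type] using h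

lemma n2_sub_comm {m n : Type*} [Fintype m] [Fintype n] (A B : Matrix m n ℝ) :
    n2 (A - B) = n2 (B - A) := by
  simp only [n2, Matrix.sub_apply]
  exact Finset.sum_congr rfl fun i _ => Finset.sum_congr rfl fun j _ => by ring

lemma n2_smul {m n : Type*} [Fintype m] [Fintype n] (c : ℝ) (A : Matrix m n ℝ) :
    n2 (c • A) = c ^ 2 * n2 A := by
  simp [n2, Matrix.smul_apply, smul_eq_mul, mul_pow, Finset.mul_sum]

lemma combo {m n : Type*} [Fintype m] [Fintype n] (a b : ℝ) (A B : Matrix m n ℝ) :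
    n2 (a • A + b • B) ≤ (a ^ 2 + b ^ 2) * (n2 A + n2 B) := by
  have h1 : n2 (a • A + b • B) ≤
      ∑ i, ∑ j, ((a ^ 2 + b ^ 2) * ((A i j) ^ 2 + (B i j) ^ 2)) := by
    refine Finset.sum_le_sum fun i _ => Finset.sum_le_sum fun j _ => ?_
    simp only [Matrix.add_apply, Matrix.smul_apply, smul_eq_mul]
    nlinarith [sq_nonneg (a * B i j - b * A i j)]
  calc n2 (a • A + b • B) ≤ ∑ i, ∑ j, ((a ^ 2 + b ^ 2) * ((A i j) ^ 2 + (B i j) ^ 2)) := h1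
    _ = (a ^ 2 + b ^ 2) * (n2 A + n2 B) := by
        simp [n2, Finset.mul_sum, Finset.sum_add_distrib, mul_add]

lemma proj_nonexpansive {m n : Type*} [Fintype m] [Fintype n]
    (S : Set (Matrix m n ℝ))
    (hconv : ∀ P ∈ S, ∀ Z ∈ S, ∀ t : ℝ, 0 ≤ t → t ≤ 1 → P + t • (Z - P) ∈ S)
    (Proj : Matrix m n ℝ → Matrix m n ℝ)
    (hmem : ∀ Y, Proj Y ∈ S)
    (hnear : ∀ Y Z, Z ∈ S → n2 (Y - Proj Y) ≤ n2 (Y - Z))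
    (Y₁ Y₂ : Matrix m n ℝ) :
    n2 (Proj Y₁ - Proj Y₂) ≤ n2 (Y₁ - Y₂) := by
  have var : ∀ Y, ∀ Z ∈ S, ip (Y - Proj Y) (Z - Proj Y) ≤ 0 := by
    intro Y Z hZ
    set P := Proj Y with hP
    have hC : 0 ≤ n2 (Z - P) := n2_nonneg _
    have key : ∀ t : ℝ, 0 < t → t ≤ 1 →
        ip (Y - P) (Z - P) ≤ t / 2 * n2 (Z - P) := by
      intro t ht0 ht1
      have hW : P + t • (Z - P) ∈ S := hconv P (hmem Y) Z hZ t ht0.le ht1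
      have hle := hnear Y _ hW
      have hexp : n2 (Y - (P + t • (Z - P))) =
          n2 (Y - P) - 2 * t * ip (Y - P) (Z - P) + t ^ 2 * n2 (Z - P) := by
        simp only [n2, ip, Matrix.sub_apply, Matrix.add_apply, Matrix.smul_apply,
          smul_eq_mul, Finset.mul_sum, ← Finset.sum_sub_distrib, ← Finset.sum_add_distrib]
        exact Finset.sum_congr rfl fun i _ => Finset.sum_congr rfl fun j _ => by ring
      rw [hexp] at hle
      nlinarith
    by_contra hpos
    push_neg at hpos
    have hC1 := key 1 one_pos le_rfl
    have hCpos : 0 < n2 (Z - P) := by nlinarith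
    set t := min 1 (ip (Y - P) (Z - P) / n2 (Z - P)) with htdef
    have ht0 : 0 < t := lt_min one_pos (div_pos hpos hCpos)
    have hkey := key t ht0 (min_le_left _ _)
    have htc : t * n2 (Z - P) ≤ ip (Y - P) (Z - P) :=
      (le_div_iff₀ hCpos).mp (min_le_right _ _)
    linarith
  have h1 := var Y₁ (Proj Y₂) (hmem Y₂)
  have h2 := var Y₂ (Proj Y₁) (hmem Y₁)
  set P₁ := Proj Y₁
  set P₂ := Proj Y₂
  have hexp : ip (Y₁ - Y₂) (P₁ - P₂) + ip (Y₁ - P₁) (P₂ - P₁) + ip (Y₂ - P₂) (P₁ - P₂)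
      = n2 (P₁ - P₂) := by
    simp only [n2, ip, Matrix.sub_apply, ← Finset.sum_add_distrib]
    exact Finset.sum_congr rfl fun i _ => Finset.sum_congr rfl fun j _ => by ring
  have hmid : n2 (P₁ - P₂) ≤ ip (Y₁ - Y₂) (P₁ - P₂) := by linarith
  have hcs := ip_cs (Y₁ - Y₂) (P₁ - P₂)
  nlinarith [n2_nonneg (P₁ - P₂), n2_nonneg (Y₁ - Y₂), hmid, hcs,
    mul_le_mul hmid hmid (n2_nonneg (P₁ - P₂)) (le_trans (n2_nonneg (P₁ - P₂)) hmid)]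

lemma bound_right {N : ℕ} (K : Matrix (Fin N) (Fin N) ℝ) (hK : K.IsSymm)
    (δK : Matrix (Fin N) (Fin N × Fin N) ℝ)
    (hδK : ∀ k i j, δK k (i, j) =
      K i j * ((if k = i then (1 : ℝ) else 0) - (if k = j then 1 else 0)))
    {M : ℝ} (hM : ∀ i, ∑ j, (K i j) ^ 2 ≤ M)
    (A : Matrix (Fin N) (Fin N) ℝ) :
    n2 (A * δK) ≤ 4 * M * n2 A := by
  have hsym : ∀ j, ∑ i, (K i j) ^ 2 ≤ M := by
    intro j
    calc ∑ i, (K i j) ^ 2 = ∑ i, (K j i) ^ 2 :=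
          Finset.sum_congr rfl fun i _ => by rw [hK.apply]
      _ ≤ M := hM j
  have hent : ∀ k i j, (A * δK) k (i, j) = K i j * (A k i - A k j) := by
    intro k i j
    rw [Matrix.mul_apply]
    have h : ∀ l, A k l * δK l (i, j) =
        (if l = i then A k l * K i j else 0) - (if l = j then A k l * K i j else 0) := by
      intro l; rw [hδK]; split_ifs <;> ring
    simp only [h, Finset.sum_sub_distrib, Finset.sum_ite_eq', Finset.mem_univ, if_true]
    ring
  have h1 : n2 (A * δK) = ∑ k, ∑ i, ∑ j, (K i j) ^ 2 * (A k i - A k j) ^ 2 := by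
    simp only [n2, Fintype.sum_prod_type]
    exact Finset.sum_congr rfl fun k _ => Finset.sum_congr rfl fun i _ =>
      Finset.sum_congr rfl fun j _ => by rw [hent]; ring
  have h2 : n2 (A * δK) ≤
      ∑ k, ∑ i, ∑ j, ((K i j) ^ 2 * (2 * (A k i) ^ 2) + (K i j) ^ 2 * (2 * (A k j) ^ 2)) := by
    rw [h1]
    refine Finset.sum_le_sum fun k _ => Finset.sum_le_sum fun i _ =>
      Finset.sum_le_sum fun j _ => ?_
    nlinarith [sq_nonneg (K i j * (A k i + A k j))]
  have h3 : ∑ k, ∑ i, ∑ j, (K i j) ^ 2 * (2 * (A k i) ^ 2) ≤ ∑ k, ∑ i, 2 * M * (A k i) ^ 2 := by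
    refine Finset.sum_le_sum fun k _ => Finset.sum_le_sum fun i _ => ?_
    calc ∑ j, (K i j) ^ 2 * (2 * (A k i) ^ 2) = (∑ j, (K i j) ^ 2) * (2 * (A k i) ^ 2) :=
          (Finset.sum_mul _ _ _).symm
      _ ≤ M * (2 * (A k i) ^ 2) := by
          have h := hM i
          nlinarith [sq_nonneg (A k i)]
      _ = 2 * M * (A k i) ^ 2 := by ring
  have h4 : ∑ k, ∑ i, ∑ j, (K i j) ^ 2 * (2 * (A k j) ^ 2) ≤ ∑ k, ∑ j, 2 * M * (A k j) ^ 2 := by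
    refine Finset.sum_le_sum fun k _ => ?_
    rw [Finset.sum_comm]
    refine Finset.sum_le_sum fun j _ => ?_
    calc ∑ i, (K i j) ^ 2 * (2 * (A k j) ^ 2) = (∑ i, (K i j) ^ 2) * (2 * (A k j) ^ 2) :=
          (Finset.sum_mul _ _ _).symm
      _ ≤ M * (2 * (A k j) ^ 2) := by
          have h := hsym j
          nlinarith [sq_nonneg (A k j)]
      _ = 2 * M * (A k j) ^ 2 := by ring
  have hsplit : ∑ k, ∑ i, ∑ j,
        ((K i j) ^ 2 * (2 * (A k i) ^ 2) + (K i j) ^ 2 * (2 * (A k j) ^ 2))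
      = (∑ k, ∑ i, ∑ j, (K i j) ^ 2 * (2 * (A k i) ^ 2))
        + ∑ k, ∑ i, ∑ j, (K i j) ^ 2 * (2 * (A k j) ^ 2) := by
    simp [Finset.sum_add_distrib]
  have h5 : ∑ k, ∑ i, 2 * M * (A k i) ^ 2 = 2 * M * n2 A := by
    simp [n2, Finset.mul_sum]
  have h6 : ∑ k, ∑ j, 2 * M * (A k j) ^ 2 = 2 * M * n2 A := by
    simp [n2, Finset.mul_sum]
  linarith

lemma bound_left {N : ℕ} (K : Matrix (Fin N) (Fin N) ℝ) (hK : K.IsSymm)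
    (δK : Matrix (Fin N) (Fin N × Fin N) ℝ)
    (hδK : ∀ k i j, δK k (i, j) =
      K i j * ((if k = i then (1 : ℝ) else 0) - (if k = j then 1 else 0)))
    {M : ℝ} (hM : ∀ i, ∑ j, (K i j) ^ 2 ≤ M)
    (B : Matrix (Fin N) (Fin N × Fin N) ℝ) :
    n2 (B * δKᵀ) ≤ 4 * M * n2 B := by
  have hsym : ∀ j, ∑ i, (K i j) ^ 2 ≤ M := by
    intro j
    calc ∑ i, (K i j) ^ 2 = ∑ i, (K j i) ^ 2 :=
          Finset.sum_congr rfl fun i _ => by rw [hK.apply]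
      _ ≤ M := hM j
  have hent : ∀ k l, (B * δKᵀ) k l =
      (∑ j, B k (l, j) * K l j) - ∑ i, B k (i, l) * K i l := by
    intro k l
    rw [Matrix.mul_apply]
    simp only [Matrix.transpose_apply, Fintype.sum_prod_type]
    have h : ∀ i j, B k (i, j) * δK l (i, j) =
        (if l = i then B k (i, j) * K i j else 0)
          - (if l = j then B k (i, j) * K i j else 0) := by
      intro i j; rw [hδK]; split_ifs <;> ring
    simp only [h, Finset.sum_sub_distrib]
    congr 1
    · rw [Finset.sum_comm]
      simp [Finset.sum_ite_eq]
    · simp [Finset.sum_ite_eq]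
  have pull : ∀ (f : Fin N → ℝ), ∑ l, 2 * f l * M = 2 * (∑ l, f l) * M := by
    intro f
    rw [Finset.mul_sum, Finset.sum_mul]
  have hptw : ∀ k l, ((B * δKᵀ) k l) ^ 2 ≤
      2 * (∑ j, (B k (l, j)) ^ 2) * M + 2 * (∑ i, (B k (i, l)) ^ 2) * M := by
    intro k l
    have c1 := Finset.sum_mul_sq_le_sq_mul_sq Finset.univ
      (fun j => B k (l, j)) (fun j => K l j)
    have c1' : (∑ j, B k (l, j) * K l j) ^ 2 ≤ (∑ j, (B k (l, j)) ^ 2) * M :=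
      le_trans c1 (mul_le_mul_of_nonneg_left (hM l)
        (Finset.sum_nonneg fun _ _ => sq_nonneg _))
    have c2 := Finset.sum_mul_sq_le_sq_mul_sq Finset.univ
      (fun i => B k (i, l)) (fun i => K i l)
    have c2' : (∑ i, B k (i, l) * K i l) ^ 2 ≤ (∑ i, (B k (i, l)) ^ 2) * M :=
      le_trans c2 (mul_le_mul_of_nonneg_left (hsym l)
        (Finset.sum_nonneg fun _ _ => sq_nonneg _))
    rw [hent]
    nlinarith [c1', c2', sq_nonneg ((∑ j, B k (l, j) * K l j) + ∑ i, B k (i, l) * K i l)]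
  have hperk : ∀ k, ∑ l, ((B * δKᵀ) k l) ^ 2 ≤ 4 * M * ∑ c, (B k c) ^ 2 := by
    intro k
    have e1 : ∑ l, ∑ j, (B k (l, j)) ^ 2 = ∑ c, (B k c) ^ 2 :=
      (Fintype.sum_prod_type fun c : Fin N × Fin N => (B k c) ^ 2).symm
    have e2 : ∑ l, ∑ i, (B k (i, l)) ^ 2 = ∑ c, (B k c) ^ 2 := by
      rw [Finset.sum_comm]
      exact (Fintype.sum_prod_type fun c : Fin N × Fin N => (B k c) ^ 2).symm
    calc ∑ l, ((B * δKᵀ) k l) ^ 2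
        ≤ ∑ l, (2 * (∑ j, (B k (l, j)) ^ 2) * M + 2 * (∑ i, (B k (i, l)) ^ 2) * M) :=
          Finset.sum_le_sum fun l _ => hptw k l
      _ = 2 * (∑ l, ∑ j, (B k (l, j)) ^ 2) * M + 2 * (∑ l, ∑ i, (B k (i, l)) ^ 2) * M := by
          rw [Finset.sum_add_distrib, pull (fun l => ∑ j, (B k (l, j)) ^ 2),
            pull (fun l => ∑ i, (B k (i, l)) ^ 2)]
      _ = 2 * (∑ c, (B k c) ^ 2) * M + 2 * (∑ c, (B k c) ^ 2) * M := by rw [e1, e2]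
      _ = 4 * M * ∑ c, (B k c) ^ 2 := by ring
  calc n2 (B * δKᵀ) ≤ ∑ k, 4 * M * ∑ c, (B k c) ^ 2 :=
        Finset.sum_le_sum fun k _ => hperk k
    _ = 4 * M * n2 B := by simp [n2, Finset.mul_sum]

end Stmt16Aux

open Stmt16Aux

/-- Lipschitz continuity of the dual gradients: with
`G(p,q) = Π(Φ − λ(α p δ_Kᵀ + (1−α) q δ_Kᵀ)) δ_K`, the gradient map
`(p,q) ↦ (2λα G(p,q), 2λ(1−α) G(p,q))` of the dual objective is Lipschitz with
constant `L = 16λ² max(α², (1−α)²) max_i ‖K_{i·}‖₂²`. -/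
theorem stmt_16 (N : ℕ) (hN : 0 < N)
    (K : Matrix (Fin N) (Fin N) ℝ) (hK : K.IsSymm)
    (δK : Matrix (Fin N) (Fin N × Fin N) ℝ)
    (hδK : ∀ k i j, δK k (i, j) =
      K i j * ((if k = i then (1 : ℝ) else 0) - (if k = j then 1 else 0)))
    (Φ : Matrix (Fin N) (Fin N) ℝ) (lam α : ℝ)
    (hlam : 0 ≤ lam) (hα0 : 0 ≤ α) (hα1 : α ≤ 1)
    (Proj : Matrix (Fin N) (Fin N) ℝ → Matrix (Fin N) (Fin N) ℝ)
    (hProjMem : ∀ Y, (∀ i j, 0 ≤ Proj Y i j) ∧ (∀ i, ∑ j, Proj Y i j = 1) ∧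
      (∀ j, ∑ i, Proj Y i j = 1))
    (hProjNear : ∀ Y Z : Matrix (Fin N) (Fin N) ℝ,
      ((∀ i j, 0 ≤ Z i j) ∧ (∀ i, ∑ j, Z i j = 1) ∧ (∀ j, ∑ i, Z i j = 1)) →
      Real.sqrt (∑ i, ∑ j, ((Y - Proj Y) i j) ^ 2) ≤
        Real.sqrt (∑ i, ∑ j, ((Y - Z) i j) ^ 2))
    (G : Matrix (Fin N) (Fin N × Fin N) ℝ → Matrix (Fin N) (Fin N × Fin N) ℝ →
      Matrix (Fin N) (Fin N × Fin N) ℝ)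
    (hG : ∀ p q, G p q =
      Proj (Φ - lam • (α • (p * δKᵀ) + (1 - α) • (q * δKᵀ))) * δK)
    (p₁ q₁ p₂ q₂ : Matrix (Fin N) (Fin N × Fin N) ℝ) :
    Real.sqrt ((∑ k, ∑ c, (((2 * lam * α) • (G p₁ q₁ - G p₂ q₂)) k c) ^ 2) +
        (∑ k, ∑ c, (((2 * lam * (1 - α)) • (G p₁ q₁ - G p₂ q₂)) k c) ^ 2)) ≤
      16 * lam ^ 2 * max (α ^ 2) ((1 - α) ^ 2) * (⨆ i : Fin N, ∑ j, (K i j) ^ 2) *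
        Real.sqrt ((∑ k, ∑ c, ((p₁ - p₂) k c) ^ 2) +
          (∑ k, ∑ c, ((q₁ - q₂) k c) ^ 2)) := by
  classical
  -- the supremum bound
  set M : ℝ := ⨆ i : Fin N, ∑ j, (K i j) ^ 2 with hMdef
  have hMb : ∀ i, ∑ j, (K i j) ^ 2 ≤ M := by
    intro i
    rw [hMdef]
    exact le_ciSup (Set.Finite.bddAbove
      (Set.finite_range fun i : Fin N => ∑ j, (K i j) ^ 2)) i
  have hM0 : 0 ≤ M :=
    le_trans (Finset.sum_nonneg fun j _ => sq_nonneg _) (hMb ⟨0, hN⟩)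
  -- the convex set of doubly stochastic matrices
  set S : Set (Matrix (Fin N) (Fin N) ℝ) :=
    {Z | (∀ i j, 0 ≤ Z i j) ∧ (∀ i, ∑ j, Z i j = 1) ∧ (∀ j, ∑ i, Z i j = 1)} with hSdef
  have hconv : ∀ P ∈ S, ∀ Z ∈ S, ∀ t : ℝ, 0 ≤ t → t ≤ 1 → P + t • (Z - P) ∈ S := by
    rintro P ⟨hP0, hPr, hPc⟩ Z ⟨hZ0, hZr, hZc⟩ t ht0 ht1
    refine ⟨fun i j => ?_, fun i => ?_, fun j => ?_⟩
    · simp only [Matrix.add_apply, Matrix.smul_apply, Matrix.sub_apply, smul_eq_mul]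
      nlinarith [hP0 i j, hZ0 i j]
    · simp only [Matrix.add_apply, Matrix.smul_apply, Matrix.sub_apply, smul_eq_mul]
      rw [Finset.sum_add_distrib, ← Finset.mul_sum, Finset.sum_sub_distrib, hPr i, hZr i]
      ring
    · simp only [Matrix.add_apply, Matrix.smul_apply, Matrix.sub_apply, smul_eq_mul]
      rw [Finset.sum_add_distrib, ← Finset.mul_sum, Finset.sum_sub_distrib, hPc j, hZc j]
      ring
  have hmem : ∀ Y, Proj Y ∈ S := fun Y => hProjMem Y
  have hnear : ∀ Y Z, Z ∈ S → n2 (Y - Proj Y) ≤ n2 (Y - Z) := by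
    intro Y Z hZ
    have h : Real.sqrt (n2 (Y - Proj Y)) ≤ Real.sqrt (n2 (Y - Z)) := hProjNear Y Z hZ
    exact (Real.sqrt_le_sqrt_iff (n2_nonneg _)).mp h
  -- notation
  set Y₁ : Matrix (Fin N) (Fin N) ℝ :=
    Φ - lam • (α • (p₁ * δKᵀ) + (1 - α) • (q₁ * δKᵀ)) with hY₁
  set Y₂ : Matrix (Fin N) (Fin N) ℝ :=
    Φ - lam • (α • (p₂ * δKᵀ) + (1 - α) • (q₂ * δKᵀ)) with hY₂
  have hGdiff : G p₁ q₁ - G p₂ q₂ = (Proj Y₁ - Proj Y₂) * δK := by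
    rw [hG, hG, Matrix.sub_mul]
  set D : Matrix (Fin N) (Fin N × Fin N) ℝ :=
    α • (p₂ - p₁) + (1 - α) • (q₂ - q₁) with hD
  have hYdiff : Y₁ - Y₂ = (lam • D) * δKᵀ := by
    rw [hY₁, hY₂, hD]
    ext i j
    simp only [Matrix.sub_apply, Matrix.add_apply, Matrix.smul_apply, smul_eq_mul,
      Matrix.smul_mul, Matrix.add_mul, Matrix.sub_mul, Matrix.smul_apply]
    ring
  set SS : ℝ := (∑ k, ∑ c, ((p₁ - p₂) k c) ^ 2) + ∑ k, ∑ c, ((q₁ - q₂) k c) ^ 2 with hSS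
  have hSS0 : 0 ≤ SS := add_nonneg (n2_nonneg (p₁ - p₂)) (n2_nonneg (q₁ - q₂))
  have hSSn2 : SS = n2 (p₁ - p₂) + n2 (q₁ - q₂) := rfl
  set s2 : ℝ := α ^ 2 + (1 - α) ^ 2 with hs2def
  have hs20 : 0 ≤ s2 := add_nonneg (sq_nonneg _) (sq_nonneg _)
  set ms : ℝ := max (α ^ 2) ((1 - α) ^ 2) with hmsdef
  have hms0 : 0 ≤ ms := le_trans (sq_nonneg α) (le_max_left _ _)
  have hs2ms : s2 ≤ 2 * ms := by
    have h1 := le_max_left (α ^ 2) ((1 - α) ^ 2)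
    have h2 := le_max_right (α ^ 2) ((1 - α) ^ 2)
    rw [hs2def, hmsdef]; linarith
  -- bound on n2 of the difference of gradients
  have hD2 : n2 D ≤ s2 * SS := by
    have h := combo α (1 - α) (p₂ - p₁) (q₂ - q₁)
    rw [n2_sub_comm p₂ p₁, n2_sub_comm q₂ q₁] at h
    rw [hSSn2]
    exact h
  have hC2 : n2 (lam • D) = lam ^ 2 * n2 D := n2_smul lam D
  have hY12 : n2 (Y₁ - Y₂) ≤ 4 * M * (lam ^ 2 * n2 D) := by
    rw [hYdiff, ← hC2]
    exact bound_left K hK δK hδK hMb (lam • D)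
  have hproj : n2 (Proj Y₁ - Proj Y₂) ≤ n2 (Y₁ - Y₂) :=
    proj_nonexpansive S hconv Proj hmem hnear Y₁ Y₂
  have hΔG : n2 (G p₁ q₁ - G p₂ q₂) ≤ 16 * M ^ 2 * lam ^ 2 * s2 * SS := by
    have b1 : n2 ((Proj Y₁ - Proj Y₂) * δK) ≤ 4 * M * n2 (Proj Y₁ - Proj Y₂) :=
      bound_right K hK δK hδK hMb (Proj Y₁ - Proj Y₂)
    have b2 : 4 * M * n2 (Proj Y₁ - Proj Y₂) ≤ 4 * M * n2 (Y₁ - Y₂) :=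
      mul_le_mul_of_nonneg_left hproj (by positivity)
    have b3 : 4 * M * n2 (Y₁ - Y₂) ≤ 4 * M * (4 * M * (lam ^ 2 * n2 D)) :=
      mul_le_mul_of_nonneg_left hY12 (by positivity)
    have b4 : n2 D ≤ s2 * SS := hD2
    have b5 : 4 * M * (4 * M * (lam ^ 2 * n2 D)) ≤
        4 * M * (4 * M * (lam ^ 2 * (s2 * SS))) := by
      have : lam ^ 2 * n2 D ≤ lam ^ 2 * (s2 * SS) :=
        mul_le_mul_of_nonneg_left b4 (sq_nonneg _)
      have h2 : 4 * M * (lam ^ 2 * n2 D) ≤ 4 * M * (lam ^ 2 * (s2 * SS)) :=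
        mul_le_mul_of_nonneg_left this (by positivity)
      exact mul_le_mul_of_nonneg_left h2 (by positivity)
    rw [hGdiff]
    calc n2 ((Proj Y₁ - Proj Y₂) * δK) ≤ 4 * M * n2 (Proj Y₁ - Proj Y₂) := b1
      _ ≤ 4 * M * n2 (Y₁ - Y₂) := b2
      _ ≤ 4 * M * (4 * M * (lam ^ 2 * n2 D)) := b3
      _ ≤ 4 * M * (4 * M * (lam ^ 2 * (s2 * SS))) := b5
      _ = 16 * M ^ 2 * lam ^ 2 * s2 * SS := by ring
  -- rewrite the goal
  have hsm : ∀ c : ℝ, (∑ k, ∑ cc, ((c • (G p₁ q₁ - G p₂ q₂)) k cc) ^ 2)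
      = c ^ 2 * n2 (G p₁ q₁ - G p₂ q₂) := by
    intro c
    simp [n2, Matrix.smul_apply, smul_eq_mul, mul_pow, Finset.mul_sum]
  rw [hsm, hsm]
  have hn2G0 : 0 ≤ n2 (G p₁ q₁ - G p₂ q₂) := n2_nonneg _
  have hkey : (2 * lam * α) ^ 2 * n2 (G p₁ q₁ - G p₂ q₂)
      + (2 * lam * (1 - α)) ^ 2 * n2 (G p₁ q₁ - G p₂ q₂)
      ≤ (16 * lam ^ 2 * ms * M) ^ 2 * SS := by
    have e0 : (2 * lam * α) ^ 2 * n2 (G p₁ q₁ - G p₂ q₂)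
        + (2 * lam * (1 - α)) ^ 2 * n2 (G p₁ q₁ - G p₂ q₂)
        = 4 * lam ^ 2 * s2 * n2 (G p₁ q₁ - G p₂ q₂) := by rw [hs2def]; ring
    have e1 : 4 * lam ^ 2 * s2 * n2 (G p₁ q₁ - G p₂ q₂)
        ≤ 4 * lam ^ 2 * s2 * (16 * M ^ 2 * lam ^ 2 * s2 * SS) :=
      mul_le_mul_of_nonneg_left hΔG (by positivity)
    have e2 : s2 ^ 2 ≤ 4 * ms ^ 2 := by nlinarith
    have e3 : 4 * lam ^ 2 * s2 * (16 * M ^ 2 * lam ^ 2 * s2 * SS)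
        = (64 * lam ^ 4 * M ^ 2 * SS) * s2 ^ 2 := by ring
    have e4 : (64 * lam ^ 4 * M ^ 2 * SS) * s2 ^ 2
        ≤ (64 * lam ^ 4 * M ^ 2 * SS) * (4 * ms ^ 2) :=
      mul_le_mul_of_nonneg_left e2
        (mul_nonneg (by positivity : (0:ℝ) ≤ 64 * lam ^ 4 * M ^ 2) hSS0)
    have e5 : (64 * lam ^ 4 * M ^ 2 * SS) * (4 * ms ^ 2)
        = (16 * lam ^ 2 * ms * M) ^ 2 * SS := by ring
    linarith
  have hR0 : 0 ≤ 16 * lam ^ 2 * ms * M := by positivity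
  calc Real.sqrt ((2 * lam * α) ^ 2 * n2 (G p₁ q₁ - G p₂ q₂)
        + (2 * lam * (1 - α)) ^ 2 * n2 (G p₁ q₁ - G p₂ q₂))
      ≤ Real.sqrt ((16 * lam ^ 2 * ms * M) ^ 2 * SS) := Real.sqrt_le_sqrt hkey
    _ = (16 * lam ^ 2 * ms * M) * Real.sqrt SS := by
        rw [Real.sqrt_mul (sq_nonneg _), Real.sqrt_sq hR0]
    _ = 16 * lam ^ 2 * ms * M * Real.sqrt SS := rfl
end
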